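/- Let m ≥ 1, let V be a real symmetric 2m×2m matrix with V + Z/2 positive semidefinite where Z = diag(I_m, −I_m), let ε > 0, and set V^ε = V + εI. Let w_1,…,w_m ∈ (0,1], W = diag(w_1,…,w_m), 𝒲 = W ⊕ W, and define V^ε_𝒲 = −I/2 + [I − 𝒲 + 𝒲^{1/2}(V^ε + I/2)^{-1}𝒲^{1/2}]^{-1} (the inverses exist since V^ε + I/2 is positive definite). Then V^ε_𝒲 + I/2 − M is positive semidefinite, where M is the block-diagonal matrix diag((I_m − W + ε^{-1} W)^{-1}, (I_m − W + (1+ε)^{-1} W)^{-1}). -/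

import Mathlib

/-!
Let `C = εI + (I − Z)/2 = diagonal (epsShift m ε)`, with entries `ε` and `1 + ε`, so that
`V^ε + I/2 = (V + Z/2) + C ≥ C > 0`. Inversion is antitone on positive definite matrices, hence
`(V^ε + I/2)⁻¹ ≤ C⁻¹`, and conjugating by `𝒲^{1/2}` gives
`B := I − 𝒲 + 𝒲^{1/2}(V^ε + I/2)⁻¹𝒲^{1/2} ≤ I − 𝒲 + 𝒲C⁻¹ =: N`, where `B > 0` and `N` is diagonal.
Inverting once more, `V^ε_𝒲 + I/2 = B⁻¹ ≥ N⁻¹ = M`.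
-/

open Matrix

/-- `Z = diag(I_m, −I_m)` as a `2m × 2m` matrix. -/
def Zmat (m : ℕ) : Matrix (Fin (2 * m)) (Fin (2 * m)) ℝ :=
  Matrix.diagonal fun i => if (i : ℕ) < m then 1 else -1

/-- `𝒲 = W ⊕ W`: the doubled vector of weights, `(w_1,…,w_m,w_1,…,w_m)`. -/
def wExt {m : ℕ} (w : Fin m → ℝ) : Fin (2 * m) → ℝ := fun i =>
  if h : (i : ℕ) < m then w ⟨i, h⟩ else w ⟨(i : ℕ) - m, by have := i.isLt; omega⟩

/-- Identification of `Fin (2*m)` with `Fin m ⊕ Fin m` (first block then second block). -/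
def splitIdx (m : ℕ) : Fin (2 * m) → Fin m ⊕ Fin m := fun i =>
  if h : (i : ℕ) < m then Sum.inl ⟨i, h⟩
  else Sum.inr ⟨(i : ℕ) - m, by have := i.isLt; omega⟩

/-- `V_𝒲 = −I/2 + [I − 𝒲 + 𝒲^{1/2}(V + I/2)⁻¹𝒲^{1/2}]⁻¹`, with `𝒲 = W ⊕ W` and
`𝒲^{1/2} = diag(√w) ⊕ diag(√w)`. -/
noncomputable def Vupd {m : ℕ} (V : Matrix (Fin (2 * m)) (Fin (2 * m)) ℝ)
    (w : Fin m → ℝ) : Matrix (Fin (2 * m)) (Fin (2 * m)) ℝ :=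
  (-(1 / 2 : ℝ)) • 1 +
    (1 - Matrix.diagonal (wExt w) +
      Matrix.diagonal (fun i => Real.sqrt (wExt w i)) * (V + (1 / 2 : ℝ) • 1)⁻¹ *
        Matrix.diagonal (fun i => Real.sqrt (wExt w i)))⁻¹

/-- The block-diagonal matrix `M = diag((I_m − W + ε⁻¹ W)⁻¹, (I_m − W + (1+ε)⁻¹ W)⁻¹)`. -/
noncomputable def Mblock {m : ℕ} (w : Fin m → ℝ) (ε : ℝ) :
    Matrix (Fin (2 * m)) (Fin (2 * m)) ℝ :=
  (Matrix.fromBlocks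
      ((1 - Matrix.diagonal w + ε⁻¹ • Matrix.diagonal w)⁻¹) 0 0
      ((1 - Matrix.diagonal w + (1 + ε)⁻¹ • Matrix.diagonal w)⁻¹)).submatrix
    (splitIdx m) (splitIdx m)

section

variable {n : Type*} [Fintype n] [DecidableEq n]

namespace Matrix

variable {K : Type*} [Field K]

lemma inv_diagonal_of_ne_zero {d : n → K} (hd : ∀ i, d i ≠ 0) :
    (diagonal d)⁻¹ = diagonal fun i => (d i)⁻¹ :=
  inv_eq_right_inv <| by simp [diagonal_mul_diagonal, hd]

variable [PartialOrder K] [StarRing K] [StarOrderedRing K] in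
theorem PosDef.posSemidef_inv_sub_inv {B N : Matrix n n K} (hB : B.PosDef) (hN : N.PosDef)
    (hNB : (N - B).PosSemidef) : (B⁻¹ - N⁻¹).PosSemidef := by
  have hBu : IsUnit B.det := (isUnit_iff_isUnit_det _).mp hB.isUnit
  have hNu : IsUnit N.det := (isUnit_iff_isUnit_det _).mp hN.isUnit
  have key : B⁻¹ - N⁻¹ =
      N⁻¹ * (N - B) * N⁻¹ + (N⁻¹ * (N - B)) * B⁻¹ * ((N - B) * N⁻¹) := by
    simp only [sub_mul, mul_sub, Matrix.mul_assoc, nonsing_inv_mul _ hNu, mul_nonsing_inv _ hNu,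
      nonsing_inv_mul_cancel_left _ _ hBu, mul_nonsing_inv _ hBu, Matrix.mul_one, Matrix.one_mul]
    abel
  have hNinv := hN.inv.isHermitian
  rw [key]
  refine .add ?_ ?_
  · simpa only [hNinv.eq] using hNB.conjTranspose_mul_mul_same N⁻¹
  · simpa only [conjTranspose_mul, hNinv.eq, hNB.isHermitian.eq] using
      hB.inv.posSemidef.conjTranspose_mul_mul_same ((N - B) * N⁻¹)

end Matrix

lemma one_sub_add_div_pos {w c : ℝ} (hw0 : 0 < w) (hw1 : w ≤ 1) (hc : 0 < c) :
    0 < 1 - w + w / c := by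
  have := div_pos hw0 hc
  linarith

theorem posSemidef_inv_update_sub_inv_diagonal {A : Matrix n n ℝ} {c w : n → ℝ}
    (hc : ∀ i, 0 < c i) (hw0 : ∀ i, 0 < w i) (hw1 : ∀ i, w i ≤ 1)
    (hA : (A - diagonal c).PosSemidef) :
    ((1 - diagonal w + diagonal (fun i => √(w i)) * A⁻¹ * diagonal (fun i => √(w i)))⁻¹ -
      (diagonal fun i => 1 - w i + w i / c i)⁻¹).PosSemidef := by
  set S : Matrix n n ℝ := diagonal fun i => √(w i)
  have hS_herm : Sᴴ = S := by simp [S]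
  have hS_inj : Function.Injective S.mulVec := mulVec_injective_of_isUnit <|
    isUnit_diagonal.mpr <| Pi.isUnit_iff.mpr fun i => (Real.sqrt_pos.mpr (hw0 i)).ne'.isUnit
  have hC : (diagonal c).PosDef := .diagonal hc
  have hApd : A.PosDef := by simpa using PosDef.posSemidef_add hA hC
  have hCA : ((diagonal c)⁻¹ - A⁻¹).PosSemidef :=
    hC.posSemidef_inv_sub_inv hApd (by simpa using hA)
  have hSCS : S * (diagonal c)⁻¹ * S = diagonal fun i => w i / c i := by
    rw [inv_diagonal_of_ne_zero fun i => (hc i).ne', diagonal_mul_diagonal, diagonal_mul_diagonal]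
    congr 1
    ext i
    rw [mul_right_comm, Real.mul_self_sqrt (hw0 i).le, div_eq_mul_inv]
  have hB : (1 - diagonal w + S * A⁻¹ * S).PosDef := by
    refine PosDef.posSemidef_add ?_ ?_
    · rw [← diagonal_one, diagonal_sub, posSemidef_diagonal_iff]
      exact fun i => sub_nonneg.mpr (hw1 i)
    · simpa only [hS_herm] using hApd.inv.conjTranspose_mul_mul_same hS_inj
  refine hB.posSemidef_inv_sub_inv
    (.diagonal fun i => one_sub_add_div_pos (hw0 i) (hw1 i) (hc i)) ?_
  have hNB : (diagonal fun i => 1 - w i + w i / c i) - (1 - diagonal w + S * A⁻¹ * S) =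
      Sᴴ * ((diagonal c)⁻¹ - A⁻¹) * S := by
    rw [← diagonal_add, ← diagonal_sub, diagonal_one, hS_herm, Matrix.mul_sub, Matrix.sub_mul,
      hSCS]
    abel
  rw [hNB]
  exact hCA.conjTranspose_mul_mul_same S

end

section Blocks

variable {m : ℕ}

def epsShift (m : ℕ) (ε : ℝ) : Fin (2 * m) → ℝ := fun i => if (i : ℕ) < m then ε else 1 + ε

lemma epsShift_pos {ε : ℝ} (hε : 0 < ε) (i : Fin (2 * m)) : 0 < epsShift m ε i := by
  unfold epsShift
  split_ifs <;> linarith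

lemma splitIdx_injective : Function.Injective (splitIdx m) := by
  intro i j hij
  unfold splitIdx at hij
  split_ifs at hij <;> simp only [Sum.inl.injEq, Sum.inr.injEq, Fin.mk.injEq] at hij
    <;> omega

lemma wExt_pos {w : Fin m → ℝ} (hw : ∀ k, 0 < w k) (i : Fin (2 * m)) : 0 < wExt w i := by
  unfold wExt
  split <;> apply hw

lemma wExt_le_one {w : Fin m → ℝ} (hw : ∀ k, w k ≤ 1) (i : Fin (2 * m)) : wExt w i ≤ 1 := by
  unfold wExt
  split <;> apply hw

lemma add_smul_one_add_half_sub_diagonal (V : Matrix (Fin (2 * m)) (Fin (2 * m)) ℝ) (ε : ℝ) :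
    V + ε • 1 + (1 / 2 : ℝ) • 1 - diagonal (epsShift m ε) = V + (1 / 2 : ℝ) • Zmat m := by
  rw [add_assoc, add_sub_assoc]
  congr 1
  ext i j
  rcases eq_or_ne i j with rfl | hij
  · simp only [Zmat, Matrix.sub_apply, Matrix.add_apply, Matrix.smul_apply, one_apply_eq,
      diagonal_apply_eq, epsShift, smul_eq_mul]
    split_ifs <;> ring
  · simp [Zmat, hij]

lemma Vupd_add_half (V : Matrix (Fin (2 * m)) (Fin (2 * m)) ℝ) (w : Fin m → ℝ) :
    Vupd V w + (1 / 2 : ℝ) • 1 =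
      (1 - diagonal (wExt w) + diagonal (fun i => √(wExt w i)) * (V + (1 / 2 : ℝ) • 1)⁻¹ *
        diagonal (fun i => √(wExt w i)))⁻¹ := by
  rw [Vupd]
  module

lemma Mblock_eq_inv_diagonal {w : Fin m → ℝ} {ε : ℝ} (hε : 0 < ε) (hw0 : ∀ k, 0 < w k)
    (hw1 : ∀ k, w k ≤ 1) :
    Mblock w ε = (diagonal fun i => 1 - wExt w i + wExt w i / epsShift m ε i)⁻¹ := by
  have hblock : ∀ a : ℝ, 0 < a →
      (1 - diagonal w + a⁻¹ • diagonal w)⁻¹ = diagonal fun k => (1 - w k + w k / a)⁻¹ := by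
    intro a ha
    rw [← diagonal_one, ← diagonal_smul, diagonal_sub, diagonal_add,
      inv_diagonal_of_ne_zero fun k => ?_]
    · simp only [Pi.smul_apply, smul_eq_mul, inv_mul_eq_div]
    · simpa only [Pi.smul_apply, smul_eq_mul, inv_mul_eq_div] using
        (one_sub_add_div_pos (hw0 k) (hw1 k) ha).ne'
  rw [Mblock, hblock ε hε, hblock (1 + ε) (by linarith), fromBlocks_diagonal,
    submatrix_diagonal _ _ splitIdx_injective, inv_diagonal_of_ne_zero fun i => ?_]
  · congr 1
    ext i
    by_cases h : (i : ℕ) < m <;> simp [splitIdx, wExt, epsShift, h]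
  · exact (one_sub_add_div_pos (wExt_pos hw0 i) (wExt_le_one hw1 i) (epsShift_pos hε i)).ne'

end Blocks

theorem eps_update_lower_bound_general {m : ℕ}
    (V : Matrix (Fin (2 * m)) (Fin (2 * m)) ℝ)
    (hVZ : (V + (1 / 2 : ℝ) • Zmat m).PosSemidef)
    (ε : ℝ) (hε : 0 < ε)
    (w : Fin m → ℝ) (hw0 : ∀ k, 0 < w k) (hw1 : ∀ k, w k ≤ 1) :
    (Vupd (V + ε • 1) w + (1 / 2 : ℝ) • 1 - Mblock w ε).PosSemidef := by
  rw [Vupd_add_half, Mblock_eq_inv_diagonal hε hw0 hw1]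
  refine posSemidef_inv_update_sub_inv_diagonal (epsShift_pos hε) (wExt_pos hw0)
    (wExt_le_one hw1) ?_
  rwa [add_smul_one_add_half_sub_diagonal]

/-- if `V` is real symmetric with `V + Z/2` positive semidefinite, `ε > 0`,
`V^ε = V + εI`, and `w_k ∈ (0,1]`, then `V^ε_𝒲 + I/2 − M` is positive semidefinite, where
`M = diag((I_m − W + ε⁻¹W)⁻¹, (I_m − W + (1+ε)⁻¹W)⁻¹)`. -/
theorem eps_update_lower_bound {m : ℕ} (hm : 1 ≤ m)
    (V : Matrix (Fin (2 * m)) (Fin (2 * m)) ℝ) (hV : V.IsSymm)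
    (hVZ : (V + (1 / 2 : ℝ) • Zmat m).PosSemidef)
    (ε : ℝ) (hε : 0 < ε)
    (w : Fin m → ℝ) (hw0 : ∀ k, 0 < w k) (hw1 : ∀ k, w k ≤ 1) :
    (Vupd (V + ε • 1) w + (1 / 2 : ℝ) • 1 - Mblock w ε).PosSemidef :=
  eps_update_lower_bound_general V hVZ ε hε w hw0 hw1
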